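/- Let k, ℓ > 0, let π1 ∈ T_k and π2 ∈ T_ℓ, and let i be an integer with 1 ≤ i ≤ slmax(π2). Then slmax(C2(π1, π2, i)) = slmax(π1) + slmax(π2) − i + 1. -/

import Mathlib

/-!
Since `k + ℓ + 1` is the largest entry of `C2(π1, π2, i)`, stack-sorting splits there:
`S(C2) = S(π1)^{+(0,k,a_i)} · S(π2)^{+(k-1,a_i+1,k)} · (k+ℓ+1)`, because `S` commutes with
order-preserving relabellings. The first block has the left-to-right maxima of `S(π1)` and
maximum `k + a_i`. An entry of the second block exceeds `k + a_i` exactly when it comes from an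
entry of `S(π2)` exceeding `a_i`, so the left-to-right maxima it contributes are the images of
`a_{i+1}, …`, that is `slmax(π2) − i` of them. The final entry adds one more.
-/

namespace TSP

theorem foldr_max_mem {α : Type} [LinearOrder α] (x : α) (l : List α) :
    l.foldr max x ∈ x :: l := by
  induction l with
  | nil => simp
  | cons a t ih =>
    simp only [List.foldr_cons]
    rcases max_choice a (t.foldr max x) with h | h <;> rw [h]
    · simp
    · rcases List.mem_cons.mp ih with h' | h'
      · rw [h']; simp
      · exact List.mem_cons.mpr (Or.inr (List.mem_cons.mpr (Or.inr h')))

theorem length_takeWhile_lt {α : Type} [DecidableEq α] {m : α} {l : List α}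
    (h : m ∈ l) : (l.takeWhile (· ≠ m)).length < l.length := by
  have hd : l.dropWhile (· ≠ m) ≠ [] := by
    intro hnil
    have := List.dropWhile_eq_nil_iff.mp hnil m h
    simp at this
  have hsum : (l.takeWhile (· ≠ m)).length + (l.dropWhile (· ≠ m)).length = l.length := by
    rw [← List.length_append, List.takeWhile_append_dropWhile]
  have : 0 < (l.dropWhile (· ≠ m)).length := List.length_pos_iff.mpr hd
  omega

theorem length_tail_dropWhile_lt {α : Type} [DecidableEq α] {m : α} {l : List α}
    (h : l ≠ []) : ((l.dropWhile (· ≠ m)).tail).length < l.length := by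
  have hsum : (l.takeWhile (· ≠ m)).length + (l.dropWhile (· ≠ m)).length = l.length := by
    rw [← List.length_append, List.takeWhile_append_dropWhile]
  have h2 : ((l.dropWhile (· ≠ m)).tail).length = (l.dropWhile (· ≠ m)).length - 1 :=
    List.length_tail
  have : 0 < l.length := List.length_pos_iff.mpr h
  omega

/-- The stack-sorting operator `S`: `S(ε) = ε`, and if `A` is nonempty with
largest element `m` and `A = A_L · (m) · A_R`, then `S(A) = S(A_L) · S(A_R) · (m)`. -/
def S {α : Type} [LinearOrder α] : List α → List α
  | [] => []
  | x :: l =>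
    let m := l.foldr max x
    S ((x :: l).takeWhile (· ≠ m)) ++ S (((x :: l).dropWhile (· ≠ m)).tail) ++ [m]
termination_by l => l.length
decreasing_by
  · have hm := foldr_max_mem x l
    rw [← List.foldr_attach] at hm
    exact length_takeWhile_lt hm
  · exact length_tail_dropWhile_lt (by simp)

/-- The identity permutation `id_n = (1, 2, …, n)` as a list. -/
def idPerm (n : ℕ) : List ℕ := List.range' 1 n

/-- `l` is a permutation of `{1, …, n}` (viewed as a sequence). -/
def IsPermOf (n : ℕ) (l : List ℕ) : Prop := l.Perm (idPerm n)

/-- `l` is a two-stack sortable permutation (of `{1, …, len l}`). -/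
def Is2SS (l : List ℕ) : Prop := IsPermOf l.length l ∧ S (S l) = idPerm l.length

/-- `σ^{+k}`: add `k` to every entry. -/
def shift (k : ℕ) (l : List ℕ) : List ℕ := l.map (· + k)

/-- `σ^{+(k1,m,k2)}`: add `k1` to every entry strictly smaller than `m`, `k2` to the others. -/
def shift3 (k1 m k2 : ℕ) (l : List ℕ) : List ℕ :=
  l.map (fun a => if a < m then a + k1 else a + k2)

/-- Standardization `P(A)`: the permutation of `{1,…,len A}` in the same relative order. -/
def stand (l : List ℕ) : List ℕ := l.map (fun a => (l.filter (fun b => b ≤ a)).length)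

/-- Avoidance of the pattern 231: no positions `i < j < k` with `l(k) < l(i) < l(j)`. -/
def Avoids231 (l : List ℕ) : Prop :=
  ¬ ∃ i j k, i < j ∧ j < k ∧ k < l.length ∧
      l.getD k 0 < l.getD i 0 ∧ l.getD i 0 < l.getD j 0

/-- The list of values of the left-to-right maxima of `l`, in order. -/
def lrMaxima (l : List ℕ) : List ℕ :=
  ((List.range l.length).filter
    (fun i => (l.take i).all (fun b => b < l.getD i 0))).map (fun i => l.getD i 0)

/-- `lmax`: the number of left-to-right maxima. -/
def lmax (l : List ℕ) : ℕ :=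
  (List.range l.length).countP (fun i => (l.take i).all (fun b => b < l.getD i 0))

/-- `rmax`: the number of right-to-left maxima. -/
def rmax (l : List ℕ) : ℕ :=
  (List.range l.length).countP (fun i => (l.drop (i+1)).all (fun b => b < l.getD i 0))

/-- `asc`: the number of ascents. -/
def asc (l : List ℕ) : ℕ :=
  (List.range (l.length - 1)).countP (fun i => l.getD i 0 < l.getD (i+1) 0)

/-- `des`: the number of descents. -/
def des (l : List ℕ) : ℕ :=
  (List.range (l.length - 1)).countP (fun i => l.getD (i+1) 0 < l.getD i 0)

/-- `slmax(π)`: the number of left-to-right maxima of `S(π)`. -/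
def slmax (l : List ℕ) : ℕ := lmax (S l)

/-- `sldes(π)`: the number of entries `a` that precede `a - 1` in `S(π)`. -/
def sldes (l : List ℕ) : ℕ :=
  (List.range (S l).length).countP
    (fun i => ((S l).drop (i+1)).any (fun b => b + 1 = (S l).getD i 0))

/-- The construction `C1(π1, π2) = π1 · (k+ℓ+1) · π2^{+k}`. -/
def C1 (p1 p2 : List ℕ) : List ℕ :=
  p1 ++ (p1.length + p2.length + 1) :: shift p1.length p2

/-- The `i`-th left-to-right maximum `a_i` of `S(π2)` (1-indexed). -/
def lrm (p2 : List ℕ) (i : ℕ) : ℕ := (lrMaxima (S p2)).getD (i - 1) 0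

/-- The construction `C2(π1, π2, i) = π1^{+(0,k,a_i)} · (k+ℓ+1) · π2^{+(k-1,a_i+1,k)}`. -/
def C2 (p1 p2 : List ℕ) (i : ℕ) : List ℕ :=
  shift3 0 p1.length (lrm p2 i) p1 ++
    (p1.length + p2.length + 1) :: shift3 (p1.length - 1) (lrm p2 i + 1) p1.length p2

/-- The decomposition `D(π) = (P(π_ℓ), P(π_r))`, where `π = π_ℓ · (n) · π_r`
with `n` the largest entry of `π`. -/
def D (l : List ℕ) : List ℕ × List ℕ :=
  match l with
  | [] => ([], [])
  | x :: t =>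
    let m := t.foldr max x
    (stand ((x :: t).takeWhile (· ≠ m)), stand (((x :: t).dropWhile (· ≠ m)).tail))

section StackSort

variable {α β : Type} [LinearOrder α] [LinearOrder β]

theorem foldr_max_le_iff {x n : α} {l : List α} : l.foldr max x ≤ n ↔ ∀ y ∈ x :: l, y ≤ n := by
  induction l with
  | nil => simp
  | cons a t ih => simp [ih, and_left_comm]

theorem foldr_max_eq {x m : α} {l : List α} (hm : m ∈ x :: l) (hle : ∀ y ∈ x :: l, y ≤ m) :
    l.foldr max x = m :=
  le_antisymm (foldr_max_le_iff.2 hle) (foldr_max_le_iff.1 le_rfl m hm)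

theorem foldl_max_eq {c m : α} {l : List α} (hm : m ∈ l) (hle : ∀ y ∈ l, y ≤ m) (hc : c ≤ m) :
    l.foldl max c = m := by
  rw [List.foldl_max_eq_max (List.ne_nil_of_mem hm), (List.max_eq_iff _).2 ⟨hm, hle⟩,
    max_eq_right hc]

theorem S_append_cons {A B : List α} {m : α} (hA : ∀ a ∈ A, a < m) (hB : ∀ b ∈ B, b ≤ m) :
    S (A ++ m :: B) = S A ++ S B ++ [m] := by
  obtain ⟨x, t, hxt⟩ : ∃ x t, A ++ m :: B = x :: t := by
    cases A with
    | nil => exact ⟨m, B, rfl⟩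
    | cons a A' => exact ⟨a, A' ++ m :: B, rfl⟩
  have hmax : t.foldr max x = m := by
    refine foldr_max_eq (by simp [← hxt]) ?_
    rw [← hxt]
    intro y hy
    simp only [List.mem_append, List.mem_cons] at hy
    rcases hy with hy | rfl | hy
    exacts [(hA y hy).le, le_rfl, hB y hy]
  have hA' : ∀ a ∈ A, decide (a ≠ m) = true := fun a ha => by simpa using (hA a ha).ne
  rw [hxt, S.eq_2, hmax, ← hxt, List.takeWhile_append_of_pos hA', List.dropWhile_append_of_pos hA']
  simp

theorem exists_eq_append_cons_max_or_eq_nil (l : List α) :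
    (∃ A m B, l = A ++ m :: B ∧ (∀ a ∈ A, a < m) ∧ ∀ b ∈ B, b ≤ m) ∨ l = [] := by
  induction l with
  | nil => exact .inr rfl
  | cons x t ih =>
    refine .inl ?_
    rcases ih with ⟨A, m, B, rfl, hA, hB⟩ | rfl
    · by_cases hxm : x < m
      · exact ⟨x :: A, m, B, rfl, by simpa [hxm] using hA, hB⟩
      · refine ⟨[], x, A ++ m :: B, rfl, by simp, ?_⟩
        simp only [List.mem_append, List.mem_cons]
        rintro b (hb | rfl | hb)
        exacts [((hA b hb).trans_le (not_lt.1 hxm)).le, not_lt.1 hxm, (hB b hb).trans (not_lt.1 hxm)]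
    · exact ⟨[], x, [], rfl, by simp, by simp⟩

theorem induction_on_append_cons_max {P : List α → Prop} (nil : P [])
    (step : ∀ A m B, (∀ a ∈ A, a < m) → (∀ b ∈ B, b ≤ m) → P A → P B → P (A ++ m :: B)) :
    ∀ l, P l := by
  intro l
  induction h : l.length using Nat.strong_induction_on generalizing l with
  | _ n ih =>
    obtain ⟨A, m, B, rfl, hA, hB⟩ | rfl := exists_eq_append_cons_max_or_eq_nil l
    · simp only [List.length_append, List.length_cons] at h
      exact step A m B hA hB (ih _ (by omega) A rfl) (ih _ (by omega) B rfl)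
    · exact nil

theorem S_perm (l : List α) : (S l).Perm l := by
  induction l using induction_on_append_cons_max with
  | nil => simp [S]
  | step A m B hA hB ihA ihB =>
    rw [S_append_cons hA hB]
    exact ((ihA.append ihB).append_right [m]).trans
      ((List.perm_append_singleton _ _).trans List.perm_middle.symm)

theorem S_map {f : α → β} (hf : StrictMono f) (l : List α) : S (l.map f) = (S l).map f := by
  induction l using induction_on_append_cons_max with
  | nil => simp [S]
  | step A m B hA hB ihA ihB =>
    have hA' : ∀ a ∈ A.map f, a < f m := by simpa [hf.lt_iff_lt] using hA
    have hB' : ∀ b ∈ B.map f, b ≤ f m := by simpa [hf.le_iff_le] using hB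
    rw [List.map_append, List.map_cons, S_append_cons hA' hB', S_append_cons hA hB, ihA, ihB]
    simp

end StackSort

section LeftToRightMaxima

variable {α β : Type} [LinearOrder α] [LinearOrder β]

def lrMaxAbove (c : α) : List α → List α
  | [] => []
  | x :: t => if c < x then x :: lrMaxAbove x t else lrMaxAbove c t

theorem lrMaxAbove_eq_map_filter_range (c d : α) (l : List α) :
    lrMaxAbove c l = ((List.range l.length).filter
      (fun i => decide (c < l.getD i d) && (l.take i).all (fun b => b < l.getD i d))).map
      (fun i => l.getD i d) := by
  induction l generalizing c with
  | nil => rfl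
  | cons x t ih =>
    have hpred_succ : ∀ j, (decide (c < (x :: t).getD (j + 1) d) &&
        ((x :: t).take (j + 1)).all (fun b => b < (x :: t).getD (j + 1) d)) =
        (decide (max c x < t.getD j d) && (t.take j).all (fun b => b < t.getD j d)) := by
      intro j
      simp only [List.getD_cons_succ, List.take_succ_cons, List.all_cons, max_lt_iff, Bool.decide_and,
        Bool.and_assoc]
    rw [List.length_cons, List.range_succ_eq_map, List.filter_cons, List.filter_map]
    simp only [Function.comp_def, Nat.succ_eq_add_one, hpred_succ]
    simp only [List.getD_cons_zero, List.take_zero, List.all_nil, Bool.and_true, decide_eq_true_eq,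
      lrMaxAbove]
    split_ifs with hcx
    · rw [max_eq_right hcx.le, ih, List.map_cons, List.map_map]; rfl
    · rw [max_eq_left (not_lt.1 hcx), ih, List.map_map]; rfl

theorem mem_lrMaxAbove {c y : α} {l : List α} (h : y ∈ lrMaxAbove c l) : c < y ∧ y ∈ l := by
  induction l generalizing c with
  | nil => simp [lrMaxAbove] at h
  | cons x t ih =>
    unfold lrMaxAbove at h
    split_ifs at h with hcx
    · rcases List.mem_cons.1 h with rfl | h
      · exact ⟨hcx, List.mem_cons_self⟩
      · exact ⟨hcx.trans (ih h).1, List.mem_cons_of_mem _ (ih h).2⟩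
    · exact ⟨(ih h).1, List.mem_cons_of_mem _ (ih h).2⟩

theorem pairwise_lrMaxAbove (c : α) (l : List α) : (lrMaxAbove c l).Pairwise (· < ·) := by
  induction l generalizing c with
  | nil => exact .nil
  | cons x t ih =>
    unfold lrMaxAbove
    split_ifs
    · exact .cons (fun _ hb => (mem_lrMaxAbove hb).1) (ih x)
    · exact ih c

theorem lrMaxAbove_append (c : α) (A B : List α) :
    lrMaxAbove c (A ++ B) = lrMaxAbove c A ++ lrMaxAbove (A.foldl max c) B := by
  induction A generalizing c with
  | nil => rfl
  | cons x A ih =>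
    simp only [List.cons_append, lrMaxAbove, List.foldl_cons]
    split_ifs with hcx
    · rw [max_eq_right hcx.le, ih, List.cons_append]
    · rw [max_eq_left (not_lt.1 hcx), ih]

theorem lrMaxAbove_append_singleton {c n : α} {l : List α} (hc : c < n) (hl : ∀ y ∈ l, y < n) :
    lrMaxAbove c (l ++ [n]) = lrMaxAbove c l ++ [n] := by
  induction l generalizing c with
  | nil => simp [lrMaxAbove, hc]
  | cons x t ih =>
    simp only [List.mem_cons, forall_eq_or_imp] at hl
    simp only [List.cons_append, lrMaxAbove]
    split_ifs
    · rw [ih hl.1 hl.2, List.cons_append]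
    · exact ih hc hl.2

theorem lrMaxAbove_map {f : α → β} (hf : StrictMono f) {c : α} {d : β}
    (hcd : ∀ x, d < f x ↔ c < x) (l : List α) : lrMaxAbove d (l.map f) = (lrMaxAbove c l).map f := by
  induction l generalizing c d with
  | nil => rfl
  | cons x t ih =>
    simp only [List.map_cons, lrMaxAbove, hcd]
    split_ifs
    · rw [List.map_cons, ih fun _ => hf.lt_iff_lt]
    · exact ih hcd

theorem lrMaxAbove_eq_filter {c d : α} (hcd : c ≤ d) (l : List α) :
    lrMaxAbove d l = (lrMaxAbove c l).filter (fun y => d < y) := by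
  induction l generalizing c d with
  | nil => rfl
  | cons x t ih =>
    simp only [lrMaxAbove]
    by_cases hdx : d < x
    · rw [if_pos hdx, if_pos (hcd.trans_lt hdx), List.filter_cons_of_pos (by simpa using hdx),
        List.filter_eq_self.2 fun y hy => by simpa using hdx.trans (mem_lrMaxAbove hy).1]
    · rw [if_neg hdx]
      split_ifs with hcx
      · rw [List.filter_cons_of_neg (by simpa using hdx), ih (not_lt.1 hdx)]
      · exact ih hcd

theorem filter_getElem_lt_eq_drop {M : List α} (hM : M.Pairwise (· < ·)) {j : ℕ}
    (hj : j < M.length) : M.filter (fun y => M[j] < y) = M.drop (j + 1) := by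
  induction M generalizing j with
  | nil => simp at hj
  | cons x t ih =>
    obtain ⟨hx, ht⟩ := List.pairwise_cons.1 hM
    cases j with
    | zero => simpa [List.filter_eq_self] using hx
    | succ j =>
      have hj' : j < t.length := by simpa using hj
      have hxj : x < t[j] := hx _ (List.getElem_mem _)
      simpa [List.filter_cons, hxj.asymm] using ih ht hj'

theorem lrMaxAbove_getElem (c : α) (l : List α) {j : ℕ} (hj : j < (lrMaxAbove c l).length) :
    lrMaxAbove (lrMaxAbove c l)[j] l = (lrMaxAbove c l).drop (j + 1) := by
  rw [lrMaxAbove_eq_filter (mem_lrMaxAbove (List.getElem_mem hj)).1.le,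
    filter_getElem_lt_eq_drop (pairwise_lrMaxAbove c l)]

end LeftToRightMaxima

theorem lrMaxima_eq_lrMaxAbove_zero {l : List ℕ} (hl : ∀ y ∈ l, 0 < y) :
    lrMaxima l = lrMaxAbove 0 l := by
  rw [lrMaxAbove_eq_map_filter_range 0 0, lrMaxima]
  congr 1
  refine List.filter_congr fun i hi => ?_
  have hpos : 0 < l.getD i 0 := by
    rw [List.getD_eq_getElem _ _ (List.mem_range.1 hi)]
    exact hl _ (List.getElem_mem _)
  rw [decide_eq_true hpos, Bool.true_and]

theorem lmax_eq_length_lrMaxima (l : List ℕ) : lmax l = (lrMaxima l).length := by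
  rw [lmax, lrMaxima, List.length_map, List.countP_eq_length_filter]

theorem IsPermOf.mem_iff {n : ℕ} {l : List ℕ} (h : IsPermOf n l) {y : ℕ} :
    y ∈ l ↔ 1 ≤ y ∧ y ≤ n := by
  rw [List.Perm.mem_iff h, idPerm, List.mem_range'_1]
  omega

theorem IsPermOf.S {n : ℕ} {l : List ℕ} (h : IsPermOf n l) : IsPermOf n (S l) :=
  (S_perm l).trans h

theorem strictMono_shift3Fun {k1 k2 : ℕ} (h : k1 ≤ k2) (m : ℕ) :
    StrictMono (fun a => if a < m then a + k1 else a + k2) := by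
  intro u v huv
  dsimp only
  split_ifs <;> omega

theorem S_shift3 {k1 k2 : ℕ} (h : k1 ≤ k2) (m : ℕ) (l : List ℕ) :
    S (shift3 k1 m k2 l) = shift3 k1 m k2 (S l) :=
  S_map (strictMono_shift3Fun h m) l

theorem lrMaxAbove_shift3 {k1 k2 : ℕ} (h : k1 ≤ k2) (m : ℕ) {c d : ℕ}
    (hcd : ∀ x, d < (if x < m then x + k1 else x + k2) ↔ c < x) (l : List ℕ) :
    lrMaxAbove d (shift3 k1 m k2 l) = shift3 k1 m k2 (lrMaxAbove c l) :=
  lrMaxAbove_map (strictMono_shift3Fun h m) hcd l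

theorem one_le_and_le_of_mem_shift3 {k1 k2 m n : ℕ} {l : List ℕ} (h : k1 ≤ k2)
    (hl : ∀ y ∈ l, 1 ≤ y ∧ y ≤ n) {y : ℕ} (hy : y ∈ shift3 k1 m k2 l) : 1 ≤ y ∧ y ≤ n + k2 := by
  obtain ⟨u, hu, rfl⟩ := List.mem_map.1 hy
  have := hl u hu
  split_ifs <;> omega

theorem slmax_eq_length_lrMaxAbove {π : List ℕ} (hπ : ∀ y ∈ π, 0 < y) :
    slmax π = (lrMaxAbove 0 (S π)).length := by
  rw [slmax, lmax_eq_length_lrMaxima,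
    lrMaxima_eq_lrMaxAbove_zero fun y hy => hπ y ((S_perm π).mem_iff.1 hy)]

section C2

variable {π1 π2 : List ℕ}

theorem pos_of_mem_C2 (h1 : IsPermOf π1.length π1) (h2 : IsPermOf π2.length π2) (i : ℕ) :
    ∀ y ∈ C2 π1 π2 i, 0 < y := by
  intro y hy
  simp only [C2, List.mem_append, List.mem_cons] at hy
  rcases hy with hy | rfl | hy
  · exact (one_le_and_le_of_mem_shift3 (Nat.zero_le _) (fun _ => h1.mem_iff.1) hy).1
  · omega
  · exact (one_le_and_le_of_mem_shift3 (Nat.sub_le _ _) (fun _ => h2.mem_iff.1) hy).1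

theorem S_C2 (h1 : IsPermOf π1.length π1) (h2 : IsPermOf π2.length π2) {i : ℕ}
    (ha : lrm π2 i ≤ π2.length) :
    S (C2 π1 π2 i) = shift3 0 π1.length (lrm π2 i) (S π1) ++
      shift3 (π1.length - 1) (lrm π2 i + 1) π1.length (S π2) ++ [π1.length + π2.length + 1] := by
  rw [C2, S_append_cons, S_shift3 (Nat.zero_le _), S_shift3 (Nat.sub_le _ _)]
  · intro y hy
    have := one_le_and_le_of_mem_shift3 (Nat.zero_le _) (fun _ => h1.mem_iff.1) hy
    omega
  · intro y hy
    have := one_le_and_le_of_mem_shift3 (Nat.sub_le _ _) (fun _ => h2.mem_iff.1) hy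
    omega

theorem lrMaxAbove_S_C2 (h1 : IsPermOf π1.length π1) (h2 : IsPermOf π2.length π2)
    (hk : 0 < π1.length) {i : ℕ} (ha : lrm π2 i ∈ S π2) :
    lrMaxAbove 0 (S (C2 π1 π2 i)) = shift3 0 π1.length (lrm π2 i) (lrMaxAbove 0 (S π1)) ++
      (shift3 (π1.length - 1) (lrm π2 i + 1) π1.length (lrMaxAbove (lrm π2 i) (S π2)) ++
        [π1.length + π2.length + 1]) := by
  have hS1 : ∀ y ∈ S π1, 1 ≤ y ∧ y ≤ π1.length := fun _ => h1.S.mem_iff.1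
  have hS2 : ∀ y ∈ S π2, 1 ≤ y ∧ y ≤ π2.length := fun _ => h2.S.mem_iff.1
  have ha' := hS2 _ ha
  have hmax1 : (shift3 0 π1.length (lrm π2 i) (S π1)).foldl max 0 = π1.length + lrm π2 i :=
    foldl_max_eq (List.mem_map.2 ⟨π1.length, h1.S.mem_iff.2 ⟨hk, le_rfl⟩, by simp⟩)
      (fun y hy => (one_le_and_le_of_mem_shift3 (Nat.zero_le _) hS1 hy).2) (Nat.zero_le _)
  rw [S_C2 h1 h2 ha'.2, List.append_assoc, lrMaxAbove_append, hmax1, lrMaxAbove_append_singleton,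
    lrMaxAbove_shift3 (Nat.zero_le _) _ (c := 0) (by intro x; split_ifs <;> omega),
    lrMaxAbove_shift3 (Nat.sub_le _ _) _ (c := lrm π2 i) (by intro x; split_ifs <;> omega)]
  · omega
  · intro y hy
    have := one_le_and_le_of_mem_shift3 (Nat.sub_le _ _) hS2 hy
    omega

end C2

theorem slmax_C2_general (k : ℕ) (hk : 0 < k) (π1 π2 : List ℕ)
    (h1 : π1.length = k) (h1' : Is2SS π1) (h2' : Is2SS π2)
    (i : ℕ) (hi1 : 1 ≤ i) (hi2 : i ≤ slmax π2) :
    slmax (C2 π1 π2 i) = slmax π1 + slmax π2 - i + 1 := by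
  subst h1
  have hM := slmax_eq_length_lrMaxAbove fun y hy => (h2'.1.mem_iff.1 hy).1
  have hi : i - 1 < (lrMaxAbove 0 (S π2)).length := by omega
  have ha : lrm π2 i = (lrMaxAbove 0 (S π2))[i - 1] := by
    rw [lrm, lrMaxima_eq_lrMaxAbove_zero fun y hy => (h2'.1.S.mem_iff.1 hy).1,
      List.getD_eq_getElem _ _ hi]
  have haS : lrm π2 i ∈ S π2 := ha ▸ (mem_lrMaxAbove (List.getElem_mem hi)).2
  rw [slmax_eq_length_lrMaxAbove (pos_of_mem_C2 h1'.1 h2'.1 i), lrMaxAbove_S_C2 h1'.1 h2'.1 hk haS,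
    slmax_eq_length_lrMaxAbove fun y hy => (h1'.1.mem_iff.1 hy).1, hM, ha,
    lrMaxAbove_getElem]
  simp only [List.length_append, shift3, List.length_map, List.length_drop, List.length_singleton]
  omega

/-- For `k, ℓ > 0`, `π1 ∈ T_k`, `π2 ∈ T_ℓ` and `1 ≤ i ≤ slmax(π2)`,
`slmax(C2(π1, π2, i)) = slmax(π1) + slmax(π2) − i + 1`. -/
theorem slmax_C2 (k ℓ : ℕ) (hk : 0 < k) (hℓ : 0 < ℓ) (π1 π2 : List ℕ)
    (h1 : π1.length = k) (h1' : Is2SS π1) (h2 : π2.length = ℓ) (h2' : Is2SS π2)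
    (i : ℕ) (hi1 : 1 ≤ i) (hi2 : i ≤ slmax π2) :
    slmax (C2 π1 π2 i) = slmax π1 + slmax π2 - i + 1 :=
  slmax_C2_general k hk π1 π2 h1 h1' h2' i hi1 hi2

end TSP
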